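/- A braid β ∈ B_n lies in ker(φ_r) if and only if β · 0⃗ = 0⃗ under the affine action β·x = M(β)x + v(β) on (ℤ/rℤ)^{n+1}; and if β is moreover a pure braid in ker(φ_r), then β·x = x for every x ∈ (ℤ/rℤ)^{n+1}. -/

import Mathlib

/-- The braid relations on `m` generators `σ_1, ..., σ_m` (indexed here by `Fin m`):
`σ i σ j = σ j σ i` for `|i - j| ≥ 2` and `σ i σ (i+1) σ i = σ (i+1) σ i σ (i+1)`. -/
def braidRels (m : ℕ) : Set (FreeGroup (Fin m)) :=
  { w | (∃ i j : Fin m, (i : ℕ) + 2 ≤ (j : ℕ) ∧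
          w = FreeGroup.of i * FreeGroup.of j * (FreeGroup.of i)⁻¹ * (FreeGroup.of j)⁻¹) ∨
        (∃ i j : Fin m, (i : ℕ) + 1 = (j : ℕ) ∧
          w = FreeGroup.of i * FreeGroup.of j * FreeGroup.of i *
              (FreeGroup.of j * FreeGroup.of i * FreeGroup.of j)⁻¹) }

/-- The braid group on `m + 1` strands, presented with `m` Artin generators.
`BraidGroup (n-1)` is the braid group `B_n`. -/
abbrev BraidGroup (m : ℕ) : Type := PresentedGroup (braidRels m)

/-- The `k`-th Artin generator (`0`-indexed: `braidGen k` is the Artin generator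
`σ_{k+1}` of the paper, braiding strands `k` and `k+1` in `0`-indexed numbering);
junk value `1` if `k` is out of range. -/
def braidGen {m : ℕ} (k : ℕ) : BraidGroup m :=
  if h : k < m then PresentedGroup.of (⟨k, h⟩ : Fin m) else 1

/-- The matrix `P_i` of the virtual undercrossing map: the identity `(n+1)×(n+1)` matrix
over `ℤ/rℤ` (coordinates indexed `0, ..., n`) with column `k+1` (the paper's `i = k+1`,
for the `0`-indexed generator `k`) replaced by `e_k - e_{k+1} + e_{k+2}`; identity if `k`
is out of range. -/
def Pmat (n r : ℕ) (k : ℕ) : Matrix (Fin (n + 1)) (Fin (n + 1)) (ZMod r) :=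
  Matrix.of fun s t =>
    if h : k + 1 < n then
      if t = (⟨k + 1, by omega⟩ : Fin (n + 1)) then
        (if s = (⟨k, by omega⟩ : Fin (n + 1)) then 1
         else if s = (⟨k + 1, by omega⟩ : Fin (n + 1)) then -1
         else if s = (⟨k + 2, by omega⟩ : Fin (n + 1)) then 1 else 0)
      else if s = t then 1 else 0
    else if s = t then 1 else 0

/-- The translation part `e_{i+1} - e_i` of the virtual undercrossing map on the
`0`-indexed generator `k` (the paper's `σ_i` with `i = k+1`): `e_{k+2} - e_{k+1}`
in `(ℤ/rℤ)^{n+1}`; zero if `k` is out of range. -/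
def vvec (n r : ℕ) (k : ℕ) : Fin (n + 1) → ZMod r :=
  if h : k + 1 < n then
    Pi.single (⟨k + 2, by omega⟩ : Fin (n + 1)) 1 -
      Pi.single (⟨k + 1, by omega⟩ : Fin (n + 1)) 1
  else 0

/-!
Sending `σᵢ` to `(eᵢ, (i-1 i))` defines a homomorphism from `Bₙ` to the wreath product
`(ℤ/rℤ) ≀ Sₙ`, because these images satisfy the braid relations; its two components are the
permutation `π` and the winding-number crossed homomorphism `φ`. In the coordinates
`y = S x` given by the partial sums `yₛ = x₀ + ⋯ + xₛ`, the affine map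
`x ↦ Pᵢ x + (eᵢ₊₁ - eᵢ)` becomes `y ↦ (y with yᵢ₋₁, yᵢ swapped) - eᵢ`. Hence
`M(β) = S⁻¹ Q(π β) S` and `v(β) = -S⁻¹ φ(β)` with `Q` a permutation matrix and `φ(β)`
padded by a zero. As `S` is invertible, `v(β) = 0` exactly when `φ(β) = 0`, and a pure braid
in `ker φ` has `M(β) = 1` and `v(β) = 0`.
-/

open Equiv Matrix

lemma Equiv.swap_braid {α : Type*} [DecidableEq α] {x y z : α} (hxy : x ≠ y) (hxz : x ≠ z)
    (hyz : y ≠ z) : swap x y * swap y z * swap x y = swap y z * swap x y * swap y z := by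
  have h := swap_mul_swap_mul_swap (x := z) (y := y) (z := x) hyz.symm hxz.symm
  rw [swap_comm y x, swap_comm z y] at h
  rw [h, swap_mul_swap_mul_swap hxy hxz, swap_comm]

lemma mulAutArrow_mulSingle {G α M : Type*} [Group G] [MulAction G α] [DecidableEq α] [Monoid M]
    (g : G) (i : α) (x : M) : mulAutArrow g (Pi.mulSingle i x) = Pi.mulSingle (g • i) x := by
  funext t
  change (Pi.mulSingle i x : α → M) (g⁻¹ • t) = _
  simp only [Pi.mulSingle_apply, inv_smul_eq_iff]

/-- The wreath product `R ≀ Sₙ`, with `R` written multiplicatively because `SemidirectProduct`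
wants a multiplicative normal factor. -/
abbrev Wreath (R : Type*) [AddCommGroup R] (n : ℕ) :=
  (Fin n → Multiplicative R) ⋊[mulAutArrow] Perm (Fin n)

section Wreath

variable {R : Type*} [AddCommGroup R] {n : ℕ}

def wreathGen (a : R) (k : ℕ) (hk : k + 1 < n) : Wreath R n :=
  ⟨Pi.mulSingle ⟨k + 1, hk⟩ (.ofAdd a), swap ⟨k, Nat.lt_of_succ_lt hk⟩ ⟨k + 1, hk⟩⟩

lemma wreathGen_commute (a : R) {k l : ℕ} (hk : k + 1 < n) (hl : l + 1 < n) (h : k + 2 ≤ l) :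
    wreathGen a k hk * wreathGen a l hl = wreathGen a l hl * wreathGen a k hk := by
  ext1
  · simp only [wreathGen, SemidirectProduct.mul_left, mulAutArrow_mulSingle, Perm.smul_def]
    rw [swap_apply_of_ne_of_ne, swap_apply_of_ne_of_ne, mul_comm] <;> simp [Fin.ext_iff] <;> omega
  · exact (Perm.disjoint_swap_swap (by simp [Fin.ext_iff]; omega)).commute

lemma wreathGen_braid (a : R) (k : ℕ) (hk : k + 2 < n) :
    wreathGen a k (by omega) * wreathGen a (k + 1) hk * wreathGen a k (by omega) =
      wreathGen a (k + 1) hk * wreathGen a k (by omega) * wreathGen a (k + 1) hk := by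
  have hfix : swap (⟨k, by omega⟩ : Fin n) ⟨k + 1, by omega⟩ ⟨k + 2, hk⟩ =
      ⟨k + 2, hk⟩ :=
    swap_apply_of_ne_of_ne (by simp) (by simp)
  ext1
  · simp only [wreathGen, SemidirectProduct.mul_left, SemidirectProduct.mul_right, map_mul,
      MulAut.mul_apply, mulAutArrow_mulSingle, Perm.smul_def, swap_apply_left, hfix,
      swap_apply_right]
    exact mul_rotate ..
  · exact swap_braid (by simp) (by rw [Ne, Fin.mk.injEq]; omega) (by simp)

lemma lift_wreathGen_braidRels (a : R) : ∀ w ∈ braidRels (n - 1),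
    FreeGroup.lift (fun i : Fin (n - 1) => wreathGen a i (Nat.add_lt_of_lt_sub i.2)) w = 1 := by
  rintro w (⟨i, j, hij, rfl⟩ | ⟨i, ⟨j, hj⟩, hij, rfl⟩) <;>
    simp only [map_mul, map_inv, FreeGroup.lift_apply_of]
  · rw [wreathGen_commute a _ _ hij]
    group
  · obtain rfl : j = i + 1 := hij.symm
    rw [wreathGen_braid a i (by omega)]
    group

def braidToWreath (a : R) : BraidGroup (n - 1) →* Wreath R n :=
  PresentedGroup.toGroup (lift_wreathGen_braidRels a)

lemma braidToWreath_braidGen (a : R) (k : ℕ) (hk : k + 1 < n) :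
    braidToWreath a (braidGen k) = wreathGen a k hk := by
  rw [braidGen, dif_pos (by omega), braidToWreath, PresentedGroup.toGroup.of]

def windingNumber (a : R) (β : BraidGroup (n - 1)) : Fin n → R :=
  fun t => ((braidToWreath a β).left t).toAdd

lemma windingNumber_braidGen (a : R) (k : ℕ) (hk : k + 1 < n) :
    windingNumber a (braidGen k) = Pi.single ⟨k + 1, hk⟩ a := by
  funext t
  simp only [windingNumber, braidToWreath_braidGen a k hk, wreathGen, Pi.mulSingle_apply,
    Pi.single_apply, apply_ite Multiplicative.toAdd, toAdd_ofAdd, toAdd_one]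

lemma windingNumber_mul (a : R) (α β : BraidGroup (n - 1)) :
    windingNumber a (α * β) =
      windingNumber a α + windingNumber a β ∘ ⇑(braidToWreath a α).right⁻¹ := by
  unfold windingNumber
  rw [map_mul]
  rfl

end Wreath

section ExtendPerm

variable {n : ℕ}

noncomputable def extendPerm : Perm (Fin n) →* Perm (Fin (n + 1)) :=
  Perm.viaEmbeddingHom Fin.castSuccEmb

@[simp] lemma extendPerm_castSucc (σ : Perm (Fin n)) (i : Fin n) :
    extendPerm σ i.castSucc = (σ i).castSucc :=
  Perm.viaEmbedding_apply σ Fin.castSuccEmb i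

@[simp] lemma extendPerm_last (σ : Perm (Fin n)) : extendPerm σ (Fin.last n) = Fin.last n :=
  Perm.viaEmbedding_apply_of_notMem σ _ _ (by simp [Fin.range_castSucc])

lemma extendPerm_swap (i j : Fin n) : extendPerm (swap i j) = swap i.castSucc j.castSucc := by
  refine Equiv.ext fun s => ?_
  cases s using Fin.lastCases with
  | last => rw [extendPerm_last, swap_apply_of_ne_of_ne (Fin.castSucc_lt_last _).ne'
      (Fin.castSucc_lt_last _).ne']
  | cast s => rw [extendPerm_castSucc, (Fin.castSucc_injective n).swap_apply]

lemma snoc_zero_comp_perm {A : Type*} [Zero A] (f : Fin n → A) (σ : Perm (Fin n)) :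
    (Fin.snoc (f ∘ σ) 0 : Fin (n + 1) → A) = Fin.snoc f 0 ∘ extendPerm σ := by
  funext s
  cases s using Fin.lastCases <;> simp

end ExtendPerm

section Snoc

variable {n : ℕ} {A : Type*}

lemma snoc_zero_add [AddZeroClass A] (f g : Fin n → A) :
    (Fin.snoc (f + g) 0 : Fin (n + 1) → A) = Fin.snoc f 0 + Fin.snoc g 0 := by
  funext s
  cases s using Fin.lastCases <;> simp

lemma snoc_zero_eq_zero_iff [Zero A] (f : Fin n → A) :
    (Fin.snoc f 0 : Fin (n + 1) → A) = 0 ↔ f = 0 := by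
  refine ⟨fun h => funext fun i => by simpa using congrFun h i.castSucc, ?_⟩
  rintro rfl
  funext s
  cases s using Fin.lastCases <;> simp

end Snoc

section Affine

variable {n : ℕ} {R : Type*} [CommRing R]

def partialSumMatrix (n : ℕ) (R : Type*) [CommRing R] : Matrix (Fin (n + 1)) (Fin (n + 1)) R :=
  of fun s t => if t ≤ s then 1 else 0

local notation "S" => partialSumMatrix n R

lemma det_partialSumMatrix : (S).det = 1 := by
  rw [det_of_isLowerTriangular S fun s t (h : s < t) => if_neg (not_le.2 h)]
  simp [partialSumMatrix]

lemma isUnit_det_partialSumMatrix : IsUnit (S).det :=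
  det_partialSumMatrix (n := n) (R := R) ▸ isUnit_one

noncomputable def undercrossingMatrix (σ : Perm (Fin n)) : Matrix (Fin (n + 1)) (Fin (n + 1)) R :=
  S⁻¹ * permMatrixHom (extendPerm σ) * S

noncomputable def undercrossingVector (f : Fin n → R) : Fin (n + 1) → R :=
  -(S⁻¹ *ᵥ Fin.snoc f 0)

lemma undercrossingMatrix_mul (σ τ : Perm (Fin n)) :
    (undercrossingMatrix (σ * τ) : Matrix _ _ R) =
      undercrossingMatrix σ * undercrossingMatrix τ := by
  simp only [undercrossingMatrix, map_mul, Matrix.mul_assoc,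
    mul_nonsing_inv_cancel_left _ _ isUnit_det_partialSumMatrix]

lemma undercrossingMatrix_one :
    (undercrossingMatrix 1 : Matrix (Fin (n + 1)) (Fin (n + 1)) R) = 1 := by
  rw [undercrossingMatrix, map_one, map_one, Matrix.mul_one,
    nonsing_inv_mul _ isUnit_det_partialSumMatrix]

lemma undercrossingVector_zero : (undercrossingVector 0 : Fin (n + 1) → R) = 0 := by
  rw [undercrossingVector, (snoc_zero_eq_zero_iff 0).2 rfl, mulVec_zero, neg_zero]

lemma undercrossingVector_eq_zero_iff (f : Fin n → R) : undercrossingVector f = 0 ↔ f = 0 := by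
  have hinj : Function.Injective (S⁻¹).mulVec := mulVec_injective_of_isUnit <|
    (isUnit_iff_isUnit_det _).2 (isUnit_nonsing_inv_det _ isUnit_det_partialSumMatrix)
  rw [undercrossingVector, neg_eq_zero, hinj.eq_iff' (mulVec_zero _), snoc_zero_eq_zero_iff]

lemma undercrossingVector_add_comp (σ : Perm (Fin n)) (f g : Fin n → R) :
    undercrossingVector (f + g ∘ ⇑σ⁻¹) =
      undercrossingMatrix σ *ᵥ undercrossingVector g + undercrossingVector f := by
  have hconj (y : Fin (n + 1) → R) :
      undercrossingMatrix σ *ᵥ (S⁻¹ *ᵥ y) = S⁻¹ *ᵥ (y ∘ ⇑(extendPerm σ)⁻¹) := by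
    rw [undercrossingMatrix, mulVec_mulVec, Matrix.mul_assoc, Matrix.mul_assoc,
      mul_nonsing_inv _ isUnit_det_partialSumMatrix, Matrix.mul_one, ← mulVec_mulVec,
      permMatrixHom_apply, permMatrix_mulVec]
  rw [undercrossingVector, undercrossingVector, undercrossingVector, mulVec_neg, hconj,
    snoc_zero_add, snoc_zero_comp_perm, map_inv, mulVec_add]
  abel

end Affine

section Generators

variable {n r : ℕ}

lemma Pmat_apply (k : ℕ) (hk : k + 1 < n) (u t : Fin (n + 1)) :
    Pmat n r k u t = if t = ⟨k + 1, by omega⟩ then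
        ((if u = ⟨k, by omega⟩ then 1 else 0) - (if u = ⟨k + 1, by omega⟩ then 1 else 0) +
          (if u = ⟨k + 2, by omega⟩ then 1 else 0))
      else if u = t then 1 else 0 := by
  simp only [Pmat, of_apply, dif_pos hk]
  split_ifs <;> simp_all [Fin.ext_iff]

lemma permMatrixHom_extendPerm_swap_mul_partialSumMatrix (k : ℕ) (hk : k + 1 < n) :
    permMatrixHom (extendPerm (swap ⟨k, Nat.lt_of_succ_lt hk⟩ ⟨k + 1, hk⟩)) *
        partialSumMatrix n (ZMod r) = partialSumMatrix n (ZMod r) * Pmat n r k := by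
  ext s t
  rw [permMatrixHom_apply, Perm.permMatrix, PEquiv.toMatrix_toPEquiv_mul, submatrix_apply,
    mul_apply]
  simp only [Pmat_apply k hk, mul_ite, mul_add, mul_sub, mul_one, mul_zero, Finset.sum_ite_irrel,
    Finset.sum_add_distrib, Finset.sum_sub_distrib, Finset.sum_ite_eq', Finset.mem_univ, if_true,
    extendPerm_swap, swap_inv, partialSumMatrix, of_apply, id, swap_apply_def]
  split_ifs <;> simp only [Fin.ext_iff, Fin.le_def, Fin.val_castSucc] at * <;>
    first | omega | norm_num

lemma partialSumMatrix_mulVec_vvec (k : ℕ) (hk : k + 1 < n) :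
    partialSumMatrix n (ZMod r) *ᵥ vvec n r k = -Fin.snoc (Pi.single ⟨k + 1, hk⟩ 1) 0 := by
  funext s
  cases s using Fin.lastCases <;>
    simp only [vvec, hk, dif_pos, mulVec_sub, mulVec_single_one, partialSumMatrix, Pi.sub_apply,
      Pi.neg_apply, Fin.snoc_last, Fin.snoc_castSucc, Pi.single_apply, col_apply, of_apply] <;>
    split_ifs <;> simp only [Fin.ext_iff, Fin.le_def, Fin.val_castSucc, Fin.val_last] at * <;>
    first | omega | norm_num

lemma undercrossingMatrix_swap (k : ℕ) (hk : k + 1 < n) :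
    undercrossingMatrix (swap ⟨k, Nat.lt_of_succ_lt hk⟩ ⟨k + 1, hk⟩) = Pmat n r k := by
  rw [undercrossingMatrix, Matrix.mul_assoc, permMatrixHom_extendPerm_swap_mul_partialSumMatrix,
    nonsing_inv_mul_cancel_left _ _ isUnit_det_partialSumMatrix]

lemma undercrossingVector_single (k : ℕ) (hk : k + 1 < n) :
    undercrossingVector (Pi.single ⟨k + 1, hk⟩ 1) = vvec n r k := by
  rw [undercrossingVector, ← mulVec_neg, ← partialSumMatrix_mulVec_vvec, mulVec_mulVec,
    nonsing_inv_mul _ isUnit_det_partialSumMatrix, one_mulVec]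

end Generators

/-- a braid `β ∈ B_n` lies in `ker φ_r` iff `β · 0 = 0` under the affine
action `β · x = M(β) x + v(β)` on `(ℤ/rℤ)^{n+1}` coming from the virtual undercrossing
homomorphism `Υ_r(β) = (M(β), v(β))`; and if `β` is moreover a pure braid
(`π β = 1`) in `ker φ_r`, then `β · x = x` for every `x`. -/
theorem stmt_15 (n r : ℕ) :
    ∃ (π : BraidGroup (n - 1) →* Equiv.Perm (Fin n))
      (φ : BraidGroup (n - 1) → (Fin n → ZMod r))
      (M : BraidGroup (n - 1) → Matrix (Fin (n + 1)) (Fin (n + 1)) (ZMod r))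
      (v : BraidGroup (n - 1) → (Fin (n + 1) → ZMod r)),
      (∀ k : ℕ, ∀ hk : k + 1 < n,
        π (braidGen k) = Equiv.swap ⟨k, by omega⟩ ⟨k + 1, hk⟩) ∧
      (∀ k : ℕ, ∀ hk : k + 1 < n,
        φ (braidGen k) = Pi.single (⟨k + 1, hk⟩ : Fin n) 1) ∧
      (∀ α β : BraidGroup (n - 1),
        φ (α * β) = φ α + fun t => φ β ((π α)⁻¹ t)) ∧
      (∀ k : ℕ, k + 1 < n → M (braidGen k) = Pmat n r k) ∧
      (∀ k : ℕ, k + 1 < n → v (braidGen k) = vvec n r k) ∧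
      (∀ α β : BraidGroup (n - 1), M (α * β) = M α * M β) ∧
      (∀ α β : BraidGroup (n - 1), v (α * β) = (M α).mulVec (v β) + v α) ∧
      (∀ β : BraidGroup (n - 1),
        φ β = 0 ↔ (M β).mulVec (0 : Fin (n + 1) → ZMod r) + v β = 0) ∧
      (∀ β : BraidGroup (n - 1), π β = 1 → φ β = 0 →
        ∀ x : Fin (n + 1) → ZMod r, (M β).mulVec x + v β = x) := by
  refine ⟨SemidirectProduct.rightHom.comp (braidToWreath (1 : ZMod r)), windingNumber 1,
    fun β => undercrossingMatrix (braidToWreath (1 : ZMod r) β).right,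
    fun β => undercrossingVector (windingNumber 1 β),
    fun k hk => congrArg SemidirectProduct.right (braidToWreath_braidGen 1 k hk),
    fun k hk => windingNumber_braidGen 1 k hk, windingNumber_mul 1,
    fun k hk => ?_, fun k hk => ?_, fun α β => ?_, fun α β => ?_, fun β => ?_,
    fun β hπ hφ x => ?_⟩ <;> beta_reduce
  · rw [braidToWreath_braidGen _ k hk]
    exact undercrossingMatrix_swap k hk
  · rw [windingNumber_braidGen _ k hk]
    exact undercrossingVector_single k hk
  · rw [map_mul]
    exact undercrossingMatrix_mul _ _
  · rw [windingNumber_mul]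
    exact undercrossingVector_add_comp _ _ _
  · rw [mulVec_zero, zero_add, undercrossingVector_eq_zero_iff]
  · rw [show (braidToWreath (1 : ZMod r) β).right = 1 from hπ, hφ, undercrossingMatrix_one,
      one_mulVec, undercrossingVector_zero, add_zero]
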